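/- For U = {1, e^{iπ/6}, e^{iπ/4}, e^{iπ/3}}, the set R(U) is a subring of ℂ (it contains 0 and 1 and is closed under addition, negation, and multiplication). -/

import Mathlib

open Complex

/-- The bracket `[x,y] = x * conj y - y * conj x`. -/
noncomputable def brkt (x y : ℂ) : ℂ := x * (starRingEnd ℂ) y - y * (starRingEnd ℂ) x

/-- `lineInt α β p q` is the intersection point `I_{α,β}(p,q)` of the line through `p`
with direction `α` and the line through `q` with direction `β` (for unit `α ≠ ±β`),
given by the formula of Buhler et al. -/
noncomputable def lineInt (α β p q : ℂ) : ℂ :=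
  brkt α p / brkt α β * β + brkt β q / brkt β α * α

/-- The sets `S n` in the inductive construction. -/
def stepSet (U : Set ℂ) : ℕ → Set ℂ
  | 0 => {0, 1}
  | n + 1 => {z | ∃ α ∈ U, ∃ β ∈ U, α ≠ β ∧ α ≠ -β ∧
      ∃ p ∈ stepSet U n, ∃ q ∈ stepSet U n, z = lineInt α β p q}

/-- `RU U = ⋃ n, S n`. -/
def RU (U : Set ℂ) : Set ℂ := ⋃ n, stepSet U n

/-- Elementary monomials of `U`. -/
def IsElem (U : Set ℂ) (z : ℂ) : Prop :=
  ∃ α ∈ U, ∃ β ∈ U, α ≠ β ∧ α ≠ -β ∧ z = lineInt α β 0 1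

/-- Monomials of `U`, defined inductively. -/
inductive IsMonomial (U : Set ℂ) : ℂ → Prop
  | elementary (α β : ℂ) (hα : α ∈ U) (hβ : β ∈ U) (h1 : α ≠ β) (h2 : α ≠ -β) :
      IsMonomial U (lineInt α β 0 1)
  | step (α β m : ℂ) (hα : α ∈ U) (hβ : β ∈ U) (h1 : α ≠ β) (h2 : α ≠ -β)
      (hm : IsMonomial U m) : IsMonomial U (lineInt α β 0 m)

/-- `P`: the real numbers arising as length-two monomials `I_{γ,δ}(0,z)` on the real axis. -/
def projSet (U : Set ℂ) : Set ℝ :=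
  {r | ∃ γ ∈ U, ∃ δ ∈ U, γ ≠ δ ∧ γ ≠ -δ ∧ ∃ z, IsElem U z ∧ (r : ℂ) = lineInt γ δ 0 z}

/-- `m` is a `ℤ[P]`-linear combination of elementary monomials of `U`. -/
def IsZPComb (U : Set ℂ) (m : ℂ) : Prop :=
  ∃ (n : ℕ) (c : Fin n → ℝ) (z : Fin n → ℂ),
    (∀ i, c i ∈ Subring.closure (projSet U)) ∧ (∀ i, IsElem U (z i)) ∧
    m = ∑ i, (c i : ℂ) * z i

/-! `[α, z]` is a real-linear functional of `z` vanishing on `ℝα`, and for independent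
directions `α, β` a point `z` is determined by `[α, z]` and `[β, z]` (Cramer's rule); `I_{α,β}(p,q)` is
the point `z` with `[α, z] = [α, p]` and `[β, z] = [β, q]`. With three independent directions in `U`,
parallelogram constructions show that `R(U)` is closed under `+` and `-`, and scaling a whole
construction by a real `c ∈ R(U)` shows `c • R(U) ⊆ R(U)`. If `U` contains `1, ζ₁₂ = e^{iπ/6}` and
`ζ₆ = e^{iπ/3}`, every `z ∈ R(U)` is `a + b ζ₆` with `a, b` real elements of `R(U)` (project along
`ζ₆` and along `1`, then recover `b` from `b ζ₆` by projecting onto `ℝ` along `ζ₁₂`, which gives `-b`),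
and `ζ₆² = ζ₆ - 1`, so `R(U)` is closed under products. -/

open ComplexConjugate

section Bracket

variable {α β x y z w c : ℂ}

theorem brkt_self (x : ℂ) : brkt x x = 0 := sub_self _

theorem brkt_swap (x y : ℂ) : brkt y x = -brkt x y := by
  simp only [brkt]; ring

theorem brkt_ne_zero_swap (h : brkt α β ≠ 0) : brkt β α ≠ 0 := by
  rwa [brkt_swap, neg_ne_zero]

theorem brkt_zero_right (x : ℂ) : brkt x 0 = 0 := by simp [brkt]

theorem brkt_add_right : brkt x (y + z) = brkt x y + brkt x z := by
  simp only [brkt, map_add]; ring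

theorem brkt_sub_right : brkt x (y - z) = brkt x y - brkt x z := by
  simp only [brkt, map_sub]; ring

theorem brkt_neg_right : brkt x (-y) = -brkt x y := by
  simp only [brkt, map_neg]; ring

theorem brkt_mul_right (hc : conj c = c) : brkt x (c * y) = c * brkt x y := by
  simp only [brkt, map_mul, hc]; ring

theorem conj_brkt : conj (brkt x y) = -brkt x y := by
  simp only [brkt, map_sub, map_mul, conj_conj]; ring

theorem conj_brkt_div_brkt : conj (brkt x y / brkt z w) = brkt x y / brkt z w := by
  rw [map_div₀, conj_brkt, conj_brkt, neg_div_neg_eq]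

theorem brkt_mul_eq (α β z : ℂ) : brkt α β * z = brkt α z * β - brkt β z * α := by
  simp only [brkt]; ring

theorem eq_of_brkt_eq (h : brkt α β ≠ 0) (hα : brkt α z = brkt α w) (hβ : brkt β z = brkt β w) :
    z = w :=
  mul_left_cancel₀ h (by rw [brkt_mul_eq, brkt_mul_eq α β w, hα, hβ])

theorem ne_of_brkt_ne_zero (h : brkt α β ≠ 0) : α ≠ β := by
  rintro rfl; exact h (brkt_self α)

theorem ne_neg_of_brkt_ne_zero (h : brkt α β ≠ 0) : α ≠ -β := by
  rintro rfl; exact h (by rw [brkt_swap, brkt_neg_right, brkt_self, neg_zero, neg_zero])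

end Bracket

section LineIntersection

variable {α β γ p q x y z c : ℂ}

theorem lineInt_comm : lineInt α β p q = lineInt β α q p := add_comm _ _

theorem lineInt_zero_left : lineInt α β 0 q = brkt β q / brkt β α * α := by
  rw [lineInt, brkt_zero_right, zero_div, zero_mul, zero_add]

theorem brkt_lineInt_left (h : brkt α β ≠ 0) : brkt α (lineInt α β p q) = brkt α p := by
  rw [lineInt, brkt_add_right, brkt_mul_right conj_brkt_div_brkt,
    brkt_mul_right conj_brkt_div_brkt, brkt_self, mul_zero, add_zero, div_mul_cancel₀ _ h]

theorem brkt_lineInt_right (h : brkt α β ≠ 0) : brkt β (lineInt α β p q) = brkt β q := by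
  rw [lineInt_comm, brkt_lineInt_left (brkt_ne_zero_swap h)]

theorem lineInt_eq_of_brkt (h : brkt α β ≠ 0) (hp : brkt α z = brkt α p)
    (hq : brkt β z = brkt β q) : lineInt α β p q = z :=
  eq_of_brkt_eq h (by rw [brkt_lineInt_left h, hp]) (by rw [brkt_lineInt_right h, hq])

theorem lineInt_self (h : brkt α β ≠ 0) (x : ℂ) : lineInt α β x x = x :=
  lineInt_eq_of_brkt h rfl rfl

theorem lineInt_zero_add_lineInt_zero (h : brkt α β ≠ 0) (x : ℂ) :
    lineInt α β 0 x + lineInt β α 0 x = x := by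
  conv_rhs => rw [← lineInt_self h x]
  rw [lineInt_zero_left, lineInt_zero_left, lineInt]
  ring

theorem mul_lineInt (hc : conj c = c) : c * lineInt α β p q = lineInt α β (c * p) (c * q) := by
  simp only [lineInt, brkt_mul_right hc]; ring

/-- `P = lineInt α γ x 0 ∈ ℝγ` and `Q = lineInt α β y 0 ∈ ℝβ` span a parallelogram whose fourth
vertex `P + Q` is the intersection point, and `[α, P] = [α, x]`, `[α, Q] = [α, y]`. -/
theorem brkt_lineInt_lineInt_add (hαβ : brkt α β ≠ 0) (hαγ : brkt α γ ≠ 0)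
    (hβγ : brkt β γ ≠ 0) :
    brkt α (lineInt β γ (lineInt α γ x 0) (lineInt α β y 0)) = brkt α (x + y) := by
  rw [lineInt_eq_of_brkt hβγ (z := lineInt α γ x 0 + lineInt α β y 0)]
  · simp only [brkt_add_right, brkt_lineInt_left hαγ, brkt_lineInt_left hαβ]
  · simp only [brkt_add_right, brkt_lineInt_right hαβ, brkt_zero_right, add_zero]
  · simp only [brkt_add_right, brkt_lineInt_right hαγ, brkt_zero_right, zero_add]

/-- For `P = lineInt α γ 0 x` and `Q = lineInt α β 0 x`, both in `ℝα`, the intersection point is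
`P + Q - x`. -/
theorem brkt_lineInt_lineInt_neg (hαβ : brkt α β ≠ 0) (hαγ : brkt α γ ≠ 0)
    (hβγ : brkt β γ ≠ 0) :
    brkt α (lineInt β γ (lineInt α γ 0 x) (lineInt α β 0 x)) = brkt α (-x) := by
  rw [lineInt_eq_of_brkt hβγ (z := lineInt α γ 0 x + lineInt α β 0 x - x)]
  · simp only [brkt_add_right, brkt_sub_right, brkt_neg_right, brkt_lineInt_left hαγ,
      brkt_lineInt_left hαβ, brkt_zero_right]
    ring
  · simp only [brkt_add_right, brkt_sub_right, brkt_lineInt_right hαβ]; ring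
  · simp only [brkt_add_right, brkt_sub_right, brkt_lineInt_right hαγ]; ring

theorem add_eq_lineInt (hαβ : brkt α β ≠ 0) (hαγ : brkt α γ ≠ 0) (hβγ : brkt β γ ≠ 0) :
    x + y = lineInt α β (lineInt β γ (lineInt α γ x 0) (lineInt α β y 0))
      (lineInt α γ (lineInt β γ x 0) (lineInt β α y 0)) :=
  (lineInt_eq_of_brkt hαβ (brkt_lineInt_lineInt_add hαβ hαγ hβγ).symm
    (brkt_lineInt_lineInt_add (brkt_ne_zero_swap hαβ) hβγ hαγ).symm).symm

theorem neg_eq_lineInt (hαβ : brkt α β ≠ 0) (hαγ : brkt α γ ≠ 0) (hβγ : brkt β γ ≠ 0) :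
    -x = lineInt α β (lineInt β γ (lineInt α γ 0 x) (lineInt α β 0 x))
      (lineInt α γ (lineInt β γ 0 x) (lineInt β α 0 x)) :=
  (lineInt_eq_of_brkt hαβ (brkt_lineInt_lineInt_neg hαβ hαγ hβγ).symm
    (brkt_lineInt_lineInt_neg (brkt_ne_zero_swap hαβ) hβγ hαγ).symm).symm

end LineIntersection

section Construction

variable {U : Set ℂ} {α β γ p q c x y : ℂ}

theorem stepSet_subset_succ (hα : α ∈ U) (hβ : β ∈ U) (h : brkt α β ≠ 0) (n : ℕ) :
    stepSet U n ⊆ stepSet U (n + 1) := fun z hz =>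
  ⟨α, hα, β, hβ, ne_of_brkt_ne_zero h, ne_neg_of_brkt_ne_zero h, z, hz, z, hz,
    (lineInt_self h z).symm⟩

theorem stepSet_monotone (hα : α ∈ U) (hβ : β ∈ U) (h : brkt α β ≠ 0) :
    Monotone (stepSet U) :=
  monotone_nat_of_le_succ (stepSet_subset_succ hα hβ h)

theorem zero_mem_RU : (0 : ℂ) ∈ RU U := Set.mem_iUnion.mpr ⟨0, Or.inl rfl⟩

theorem one_mem_RU : (1 : ℂ) ∈ RU U := Set.mem_iUnion.mpr ⟨0, Or.inr rfl⟩

theorem lineInt_mem_RU_of_monotone (hU : Monotone (stepSet U)) (hα : α ∈ U) (hβ : β ∈ U)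
    (h₁ : α ≠ β) (h₂ : α ≠ -β) (hp : p ∈ RU U) (hq : q ∈ RU U) : lineInt α β p q ∈ RU U := by
  obtain ⟨m, hm⟩ := Set.mem_iUnion.mp hp
  obtain ⟨n, hn⟩ := Set.mem_iUnion.mp hq
  exact Set.mem_iUnion.mpr ⟨max m n + 1, α, hα, β, hβ, h₁, h₂,
    p, hU (le_max_left m n) hm, q, hU (le_max_right m n) hn, rfl⟩

theorem lineInt_mem_RU (hα : α ∈ U) (hβ : β ∈ U) (h : brkt α β ≠ 0) (hp : p ∈ RU U)
    (hq : q ∈ RU U) : lineInt α β p q ∈ RU U :=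
  lineInt_mem_RU_of_monotone (stepSet_monotone hα hβ h) hα hβ (ne_of_brkt_ne_zero h)
    (ne_neg_of_brkt_ne_zero h) hp hq

theorem mul_mem_RU_of_conj_eq (hU : Monotone (stepSet U)) (hc : conj c = c) (hcU : c ∈ RU U)
    (hx : x ∈ RU U) : c * x ∈ RU U := by
  obtain ⟨n, hn⟩ := Set.mem_iUnion.mp hx
  clear hx
  induction n generalizing x with
  | zero =>
    rcases hn with rfl | rfl
    · rw [mul_zero]; exact zero_mem_RU
    · rwa [mul_one]
  | succ n ih =>
    obtain ⟨α, hα, β, hβ, h₁, h₂, p, hp, q, hq, rfl⟩ := hn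
    rw [mul_lineInt hc]
    exact lineInt_mem_RU_of_monotone hU hα hβ h₁ h₂ (ih hp) (ih hq)

theorem add_mem_RU (hα : α ∈ U) (hβ : β ∈ U) (hγ : γ ∈ U) (hαβ : brkt α β ≠ 0)
    (hαγ : brkt α γ ≠ 0) (hβγ : brkt β γ ≠ 0) (hx : x ∈ RU U) (hy : y ∈ RU U) :
    x + y ∈ RU U := by
  have hβα := brkt_ne_zero_swap hαβ
  rw [add_eq_lineInt hαβ hαγ hβγ]
  exact lineInt_mem_RU hα hβ hαβ
    (lineInt_mem_RU hβ hγ hβγ (lineInt_mem_RU hα hγ hαγ hx zero_mem_RU)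
      (lineInt_mem_RU hα hβ hαβ hy zero_mem_RU))
    (lineInt_mem_RU hα hγ hαγ (lineInt_mem_RU hβ hγ hβγ hx zero_mem_RU)
      (lineInt_mem_RU hβ hα hβα hy zero_mem_RU))

theorem neg_mem_RU (hα : α ∈ U) (hβ : β ∈ U) (hγ : γ ∈ U) (hαβ : brkt α β ≠ 0)
    (hαγ : brkt α γ ≠ 0) (hβγ : brkt β γ ≠ 0) (hx : x ∈ RU U) : -x ∈ RU U := by
  have hβα := brkt_ne_zero_swap hαβ
  rw [neg_eq_lineInt hαβ hαγ hβγ]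
  exact lineInt_mem_RU hα hβ hαβ
    (lineInt_mem_RU hβ hγ hβγ (lineInt_mem_RU hα hγ hαγ zero_mem_RU hx)
      (lineInt_mem_RU hα hβ hαβ zero_mem_RU hx))
    (lineInt_mem_RU hα hγ hαγ (lineInt_mem_RU hβ hγ hβγ zero_mem_RU hx)
      (lineInt_mem_RU hβ hα hβα zero_mem_RU hx))

end Construction

section TwelfthRoots

open Real

noncomputable def ζ₁₂ : ℂ := exp ((π / 6 : ℂ) * I)

noncomputable def ζ₆ : ℂ := exp ((π / 3 : ℂ) * I)

theorem ζ₁₂_eq : ζ₁₂ = (√3 + I) / 2 := by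
  rw [ζ₁₂, show (π / 6 : ℂ) = ((π / 6 : ℝ) : ℂ) by push_cast; ring, exp_mul_I, ← ofReal_cos,
    ← ofReal_sin, cos_pi_div_six, sin_pi_div_six]
  push_cast; ring

theorem ζ₆_eq : ζ₆ = (1 + √3 * I) / 2 := by
  rw [ζ₆, show (π / 3 : ℂ) = ((π / 3 : ℝ) : ℂ) by push_cast; ring, exp_mul_I, ← ofReal_cos,
    ← ofReal_sin, cos_pi_div_three, sin_pi_div_three]
  push_cast; ring

theorem ofReal_sqrt_three_sq : ((√3 : ℝ) : ℂ) ^ 2 = 3 := by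
  rw [← ofReal_pow, sq_sqrt (by norm_num : (0 : ℝ) ≤ 3)]; norm_num

theorem brkt_one_ζ₁₂ : brkt 1 ζ₁₂ = -I := by
  simp only [brkt, ζ₁₂_eq, map_one, map_div₀, map_add, conj_ofReal, conj_I, map_ofNat]
  ring

theorem brkt_ζ₁₂_ζ₆ : brkt ζ₁₂ ζ₆ = -I := by
  simp only [brkt, ζ₁₂_eq, ζ₆_eq, map_one, map_div₀, map_add, map_mul, conj_ofReal, conj_I,
    map_ofNat]
  linear_combination (-I / 2) * ofReal_sqrt_three_sq

theorem brkt_one_ζ₆ : brkt 1 ζ₆ = -√3 * I := by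
  simp only [brkt, ζ₆_eq, map_one, map_div₀, map_add, map_mul, conj_ofReal, conj_I, map_ofNat]
  ring

theorem brkt_one_ζ₁₂_ne_zero : brkt 1 ζ₁₂ ≠ 0 := by simp [brkt_one_ζ₁₂]

theorem brkt_ζ₁₂_ζ₆_ne_zero : brkt ζ₁₂ ζ₆ ≠ 0 := by simp [brkt_ζ₁₂_ζ₆]

theorem brkt_one_ζ₆_ne_zero : brkt 1 ζ₆ ≠ 0 := by simp [brkt_one_ζ₆]

theorem ζ₆_sq : ζ₆ ^ 2 = ζ₆ - 1 := by
  rw [ζ₆_eq]; linear_combination (I ^ 2 / 4) * ofReal_sqrt_three_sq + (3 / 4 : ℂ) * I_sq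

end TwelfthRoots

section Ring

variable {U : Set ℂ} {b x y : ℂ}

theorem stepSet_monotone_of_subset (hU : {1, ζ₁₂, ζ₆} ⊆ U) : Monotone (stepSet U) :=
  stepSet_monotone (hU (by simp)) (hU (by simp)) brkt_one_ζ₁₂_ne_zero

theorem add_mem_RU_of_subset (hU : {1, ζ₁₂, ζ₆} ⊆ U) (hx : x ∈ RU U) (hy : y ∈ RU U) :
    x + y ∈ RU U :=
  add_mem_RU (hU (by simp)) (hU (by simp)) (hU (by simp)) brkt_one_ζ₁₂_ne_zero
    brkt_one_ζ₆_ne_zero brkt_ζ₁₂_ζ₆_ne_zero hx hy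

theorem neg_mem_RU_of_subset (hU : {1, ζ₁₂, ζ₆} ⊆ U) (hx : x ∈ RU U) : -x ∈ RU U :=
  neg_mem_RU (hU (by simp)) (hU (by simp)) (hU (by simp)) brkt_one_ζ₁₂_ne_zero
    brkt_one_ζ₆_ne_zero brkt_ζ₁₂_ζ₆_ne_zero hx

theorem lineInt_ζ₆_ζ₁₂_zero_one : lineInt ζ₆ ζ₁₂ 0 1 = -ζ₆ := by
  rw [lineInt_zero_left, brkt_swap 1 ζ₁₂, brkt_one_ζ₁₂, brkt_ζ₁₂_ζ₆, neg_neg, div_neg,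
    div_self I_ne_zero, neg_one_mul]

theorem lineInt_one_ζ₁₂_zero_mul_ζ₆ (hb : conj b = b) : lineInt 1 ζ₁₂ 0 (b * ζ₆) = -b := by
  rw [lineInt_zero_left, brkt_mul_right hb, brkt_ζ₁₂_ζ₆, brkt_swap 1 ζ₁₂, brkt_one_ζ₁₂,
    neg_neg, mul_one, mul_neg, neg_div, mul_div_assoc, div_self I_ne_zero, mul_one]

theorem ζ₆_mem_RU (hU : {1, ζ₁₂, ζ₆} ⊆ U) : ζ₆ ∈ RU U := by
  have h := lineInt_mem_RU (hU (by simp)) (hU (by simp))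
    (brkt_ne_zero_swap brkt_ζ₁₂_ζ₆_ne_zero) zero_mem_RU one_mem_RU
  rw [lineInt_ζ₆_ζ₁₂_zero_one] at h
  simpa using neg_mem_RU_of_subset hU h

theorem exists_coords_of_mem_RU (hU : {1, ζ₁₂, ζ₆} ⊆ U) (hx : x ∈ RU U) :
    ∃ a b : ℂ, conj a = a ∧ conj b = b ∧ a ∈ RU U ∧ b ∈ RU U ∧ x = a + b * ζ₆ := by
  have h₁ : (1 : ℂ) ∈ U := hU (by simp)
  have h₆ : ζ₆ ∈ U := hU (by simp)
  have ha := lineInt_mem_RU h₁ h₆ brkt_one_ζ₆_ne_zero zero_mem_RU hx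
  have hbζ₆ := lineInt_mem_RU h₆ h₁ (brkt_ne_zero_swap brkt_one_ζ₆_ne_zero) zero_mem_RU hx
  have hx_eq := lineInt_zero_add_lineInt_zero brkt_one_ζ₆_ne_zero x
  rw [lineInt_zero_left] at ha hbζ₆ hx_eq
  rw [lineInt_zero_left, mul_one] at hx_eq
  rw [mul_one] at ha
  have hb : conj (brkt 1 x / brkt 1 ζ₆) = brkt 1 x / brkt 1 ζ₆ := conj_brkt_div_brkt
  refine ⟨_, _, conj_brkt_div_brkt, hb, ha, ?_, hx_eq.symm⟩
  have h := lineInt_mem_RU h₁ (hU (by simp)) brkt_one_ζ₁₂_ne_zero zero_mem_RU hbζ₆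
  rw [lineInt_one_ζ₁₂_zero_mul_ζ₆ hb] at h
  simpa using neg_mem_RU_of_subset hU h

theorem ζ₆_mul_mem_RU (hU : {1, ζ₁₂, ζ₆} ⊆ U) (hy : y ∈ RU U) : ζ₆ * y ∈ RU U := by
  obtain ⟨a, b, ha, hb, haU, hbU, rfl⟩ := exists_coords_of_mem_RU hU hy
  have hab : conj (a + b) = a + b := by rw [map_add, ha, hb]
  rw [show ζ₆ * (a + b * ζ₆) = (a + b) * ζ₆ + -b by linear_combination b * ζ₆_sq]
  exact add_mem_RU_of_subset hU
    (mul_mem_RU_of_conj_eq (stepSet_monotone_of_subset hU) hab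
      (add_mem_RU_of_subset hU haU hbU) (ζ₆_mem_RU hU))
    (neg_mem_RU_of_subset hU hbU)

theorem mul_mem_RU (hU : {1, ζ₁₂, ζ₆} ⊆ U) (hx : x ∈ RU U) (hy : y ∈ RU U) : x * y ∈ RU U := by
  obtain ⟨a, b, ha, hb, haU, hbU, rfl⟩ := exists_coords_of_mem_RU hU hx
  rw [show (a + b * ζ₆) * y = a * y + b * (ζ₆ * y) by ring]
  exact add_mem_RU_of_subset hU (mul_mem_RU_of_conj_eq (stepSet_monotone_of_subset hU) ha haU hy)
    (mul_mem_RU_of_conj_eq (stepSet_monotone_of_subset hU) hb hbU (ζ₆_mul_mem_RU hU hy))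

noncomputable def subringRU (hU : {1, ζ₁₂, ζ₆} ⊆ U) : Subring ℂ where
  carrier := RU U
  zero_mem' := zero_mem_RU
  one_mem' := one_mem_RU
  add_mem' := add_mem_RU_of_subset hU
  neg_mem' := neg_mem_RU_of_subset hU
  mul_mem' := mul_mem_RU hU

end Ring

/-- `R({1, e^{iπ/6}, e^{iπ/4}, e^{iπ/3}})` is a subring of `ℂ`. -/
theorem stmt16 :
    ∃ A : Subring ℂ, (A : Set ℂ) =
      RU {1, Complex.exp ((Real.pi / 6 : ℂ) * Complex.I),
          Complex.exp ((Real.pi / 4 : ℂ) * Complex.I),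
          Complex.exp ((Real.pi / 3 : ℂ) * Complex.I)} :=
  ⟨subringRU (Set.insert_subset_insert (Set.insert_subset_insert (Set.subset_insert _ _))), rfl⟩
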